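/- arXiv:1612.06048 — 2 statements merged into one kernel-verified Lean document; each statement's English description precedes it below -/
import Mathlib

section
/- Let 𝓛 := span{a(m)b(n) : a,b ∈ 𝔥, m,n ∈ ℤ} ⊆ U(ĥ) (products taken in U(ĥ)). Then c ∈ 𝓛, and for all x, y ∈ 𝓛 the commutator [x, y] = xy − yx lies in c·𝓛 (the set of elements c·z with z ∈ 𝓛). In particular 𝓛 is closed under the rescaled bracket (1/c)[·,·]. -/
noncomputable section

variable (V : Type*) [AddCommGroup V] [Module ℂ V]

/-- The underlying space of the Heisenberg Lie algebra `𝔥 ⊗ ℂ[t,t⁻¹] ⊕ ℂ c` attached to a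
vector space `𝔥` with a bilinear form `B`; the element `(f, s)` represents
`∑ₘ (f m)(m) + s·c`, where `a(m)` denotes `a ⊗ tᵐ`. -/
def Heis (B : V →ₗ[ℂ] V →ₗ[ℂ] ℂ) : Type _ := (ℤ →₀ V) × ℂ

variable {V}
variable (B : V →ₗ[ℂ] V →ₗ[ℂ] ℂ)

instance : AddCommGroup (Heis V B) := inferInstanceAs (AddCommGroup ((ℤ →₀ V) × ℂ))
instance : Module ℂ (Heis V B) := inferInstanceAs (Module ℂ ((ℤ →₀ V) × ℂ))

namespace Heis

lemma add_fst (x y : Heis V B) : (x + y).1 = x.1 + y.1 := rfl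
lemma add_snd (x y : Heis V B) : (x + y).2 = x.2 + y.2 := rfl
lemma smul_fst (t : ℂ) (x : Heis V B) : (t • x).1 = t • x.1 := rfl
lemma smul_snd (t : ℂ) (x : Heis V B) : (t • x).2 = t • x.2 := rfl
lemma zero_fst : (0 : Heis V B).1 = 0 := rfl
lemma zero_snd : (0 : Heis V B).2 = 0 := rfl

end Heis

/-- The pairing `∑ₘ m · B (f m) (g (−m))` giving the central term of the bracket. -/
def heisP (f g : ℤ →₀ V) : ℂ := f.sum fun m a => (m : ℂ) * B a (g (-m))

lemma heisP_zero_left (g : ℤ →₀ V) : heisP B 0 g = 0 := Finsupp.sum_zero_index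

lemma heisP_zero_right (f : ℤ →₀ V) : heisP B f 0 = 0 := by
  simp [heisP]

lemma heisP_add_left (f f' g : ℤ →₀ V) :
    heisP B (f + f') g = heisP B f g + heisP B f' g := by
  unfold heisP
  refine Finsupp.sum_add_index' (fun m => by simp) (fun m a a' => by simp [mul_add])

lemma heisP_add_right (f g g' : ℤ →₀ V) :
    heisP B f (g + g') = heisP B f g + heisP B f g' := by
  unfold heisP
  rw [← Finsupp.sum_add]
  exact Finsupp.sum_congr fun m _ => by simp [mul_add]

lemma heisP_smul_left (t : ℂ) (f g : ℤ →₀ V) : heisP B (t • f) g = t * heisP B f g := by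
  unfold heisP
  rw [Finsupp.sum_smul_index' (fun m => by simp), Finsupp.sum, Finsupp.sum, Finset.mul_sum]
  refine Finset.sum_congr rfl fun m _ => ?_
  simp only [map_smul, LinearMap.smul_apply, smul_eq_mul]
  ring

lemma heisP_smul_right (t : ℂ) (f g : ℤ →₀ V) : heisP B f (t • g) = t * heisP B f g := by
  unfold heisP
  rw [Finsupp.sum, Finsupp.sum, Finset.mul_sum]
  refine Finset.sum_congr rfl fun m _ => ?_
  simp only [Finsupp.smul_apply, map_smul, smul_eq_mul]
  ring

instance : LieRing (Heis V B) where
  bracket x y := (0, (heisP B x.1 y.1 - heisP B y.1 x.1) / 2)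
  add_lie x y z := by
    refine Prod.ext ?_ ?_
    · exact (zero_add (0 : ℤ →₀ V)).symm
    · show (heisP B (x + y).1 z.1 - heisP B z.1 (x + y).1) / 2 =
        (heisP B x.1 z.1 - heisP B z.1 x.1) / 2 + (heisP B y.1 z.1 - heisP B z.1 y.1) / 2
      rw [Heis.add_fst, heisP_add_left, heisP_add_right]
      ring
  lie_add x y z := by
    refine Prod.ext ?_ ?_
    · exact (zero_add (0 : ℤ →₀ V)).symm
    · show (heisP B x.1 (y + z).1 - heisP B (y + z).1 x.1) / 2 =
        (heisP B x.1 y.1 - heisP B y.1 x.1) / 2 + (heisP B x.1 z.1 - heisP B z.1 x.1) / 2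
      rw [Heis.add_fst, heisP_add_left, heisP_add_right]
      ring
  lie_self x := by
    refine Prod.ext rfl ?_
    show (heisP B x.1 x.1 - heisP B x.1 x.1) / 2 = (0 : Heis V B).2
    rw [Heis.zero_snd]
    ring
  leibniz_lie x y z := by
    refine Prod.ext ?_ ?_
    · exact (zero_add (0 : ℤ →₀ V)).symm
    · show (heisP B x.1 (0 : ℤ →₀ V) - heisP B (0 : ℤ →₀ V) x.1) / 2 =
        (heisP B (0 : ℤ →₀ V) z.1 - heisP B z.1 (0 : ℤ →₀ V)) / 2 +
        (heisP B y.1 (0 : ℤ →₀ V) - heisP B (0 : ℤ →₀ V) y.1) / 2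
      rw [heisP_zero_left, heisP_zero_right, heisP_zero_left, heisP_zero_right,
        heisP_zero_left, heisP_zero_right]
      ring

instance : LieAlgebra ℂ (Heis V B) where
  lie_smul t x y := by
    refine Prod.ext ?_ ?_
    · exact (smul_zero t).symm
    · show (heisP B x.1 (t • y).1 - heisP B (t • y).1 x.1) / 2 =
        t • ((heisP B x.1 y.1 - heisP B y.1 x.1) / 2)
      rw [Heis.smul_fst, heisP_smul_left, heisP_smul_right, smul_eq_mul]
      ring

/-- `a(m) = a ⊗ tᵐ` as an element of the Heisenberg Lie algebra. -/
def Heis.gen (a : V) (m : ℤ) : Heis V B := (Finsupp.single m a, 0)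

/-- The central element `c` of the Heisenberg Lie algebra. -/
def Heis.cen : Heis V B := (0, 1)


/-- `U(ĥ)`, the universal enveloping algebra of the Heisenberg Lie algebra. -/
abbrev UHeis : Type _ := UniversalEnvelopingAlgebra ℂ (Heis V B)

/-- The image of `a(m)` in `U(ĥ)`. -/
def genU (a : V) (m : ℤ) : UHeis B := UniversalEnvelopingAlgebra.ι ℂ (Heis.gen B a m)

/-- The image of `c` in `U(ĥ)`. -/
def cenU : UHeis B := UniversalEnvelopingAlgebra.ι ℂ (Heis.cen B)

/-- `𝓛 = span{a(m)b(n) : a,b ∈ 𝔥, m,n ∈ ℤ} ⊆ U(ĥ)`. -/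
def spanL : Submodule ℂ (UHeis B) :=
  Submodule.span ℂ {x : UHeis B | ∃ a b : V, ∃ m n : ℤ, x = genU B a m * genU B b n}

/-!
The generators of `U(ĥ)` commute up to scalar multiples of the central element:
`a(m) b(n) - b(n) a(m) = m (a, b) δ_{m+n,0} c`. Expanding
`[AB, CD] = A[B,C]D + AC[B,D] + [A,C]DB + C[A,D]B` and moving the central factor `c` to
the front puts the commutator of two quadratic monomials into `c·𝓛`, and bilinearity of
the commutator extends this to all of `𝓛`. Nondegeneracy provides `a, b` with `(a, b) ≠ 0`,
and then `c = (a, b)⁻¹ [a(1), b(-1)] ∈ 𝓛`.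
-/

section CentralCommutators

open Pointwise

variable {k A : Type*} [CommRing k] [Ring A] [Algebra k A]

lemma mul_mul_sub_mul_mul (a b c d : A) :
    a * b * (c * d) - c * d * (a * b) =
      a * (b * c - c * b) * d + a * c * (b * d - d * b) + (a * c - c * a) * d * b +
        c * (a * d - d * a) * b := by
  noncomm_ring

theorem mul_sub_mul_mem_map_mulLeft_span_mul {ι : Type*} {z : A} {g : ι → A}
    (hz : ∀ i, Commute z (g i)) (hg : ∀ i j, ∃ r : k, g i * g j - g j * g i = r • z)
    {x y : A} (hx : x ∈ Submodule.span k (Set.range g * Set.range g))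
    (hy : y ∈ Submodule.span k (Set.range g * Set.range g)) :
    x * y - y * x ∈
      (Submodule.span k (Set.range g * Set.range g)).map (LinearMap.mulLeft k z) := by
  set L := Submodule.span k (Set.range g * Set.range g)
  have hL : ∀ i j, g i * g j ∈ L := fun i j =>
    Submodule.subset_span (Set.mul_mem_mul (Set.mem_range_self i) (Set.mem_range_self j))
  have hmem : ∀ i j, ∀ u v : A, Commute z u → u * v ∈ L →
      u * (g i * g j - g j * g i) * v ∈ L.map (LinearMap.mulLeft k z) := by
    intro i j u v hu huv
    obtain ⟨r, hr⟩ := hg i j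
    refine ⟨r • (u * v), L.smul_mem r huv, ?_⟩
    rw [hr, LinearMap.mulLeft_apply, mul_smul_comm, mul_smul_comm, smul_mul_assoc,
      ← mul_assoc, hu.eq]
  refine LinearMap.BilinMap.apply_apply_mem_of_mem_span _ _ _
    (LinearMap.mul k A - (LinearMap.mul k A).flip) ?_ x y hx hy
  rintro _ ⟨_, ⟨a, rfl⟩, _, ⟨b, rfl⟩, rfl⟩ _ ⟨_, ⟨c, rfl⟩, _, ⟨d, rfl⟩, rfl⟩
  simp only [LinearMap.sub_apply, LinearMap.flip_apply, LinearMap.mul_apply']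
  rw [mul_mul_sub_mul_mul]
  refine add_mem (add_mem (add_mem ?_ ?_) ?_) ?_
  · exact hmem b c (g a) (g d) (hz a) (hL a d)
  · simpa using hmem b d (g a * g c) 1 ((hz a).mul_right (hz c)) (by simpa using hL a c)
  · simpa [mul_assoc] using
      hmem a c 1 (g d * g b) (Commute.one_right z) (by simpa using hL d b)
  · exact hmem a d (g c) (g b) (hz c) (hL c b)

end CentralCommutators

lemma heisP_single_single (a b : V) (m n : ℤ) :
    heisP B (Finsupp.single m a) (Finsupp.single n b) =
      if n = -m then (m : ℂ) * B a b else 0 := by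
  rw [heisP, Finsupp.sum_single_index (by simp), Finsupp.single_apply]
  split_ifs <;> simp_all

namespace Heis

lemma lie_gen_gen (hsym : ∀ x y, B x y = B y x) (a b : V) (m n : ℤ) :
    ⁅gen B a m, gen B b n⁆ = (if n = -m then (m : ℂ) * B a b else 0) • cen B := by
  refine Prod.ext (smul_zero _).symm ?_
  change (heisP B (Finsupp.single m a) (Finsupp.single n b) -
      heisP B (Finsupp.single n b) (Finsupp.single m a)) / 2 =
    (if n = -m then (m : ℂ) * B a b else 0) * 1
  rw [heisP_single_single, heisP_single_single]
  by_cases h : n = -m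
  · subst h
    simp only [neg_neg, if_true, hsym b a]
    push_cast
    ring
  · simp [h, show m ≠ -n by omega]

lemma lie_cen (x : Heis V B) : ⁅cen B, x⁆ = 0 := by
  refine Prod.ext rfl ?_
  change (heisP B 0 x.1 - heisP B x.1 0) / 2 = 0
  rw [heisP_zero_left, heisP_zero_right, sub_zero, zero_div]

end Heis

section

attribute [local instance 100] LieRing.ofAssociativeRing

lemma UniversalEnvelopingAlgebra.ι_mul_ι_sub_ι_mul_ι {R L : Type*} [CommRing R] [LieRing L]
    [LieAlgebra R L] (x y : L) : ι R x * ι R y - ι R y * ι R x = ι R ⁅x, y⁆ := by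
  rw [LieHom.map_lie, Ring.lie_def]

end

open UniversalEnvelopingAlgebra in
lemma genU_mul_genU_sub (hsym : ∀ x y, B x y = B y x) (a b : V) (m n : ℤ) :
    genU B a m * genU B b n - genU B b n * genU B a m =
      (if n = -m then (m : ℂ) * B a b else 0) • cenU B := by
  rw [genU, genU, ι_mul_ι_sub_ι_mul_ι, Heis.lie_gen_gen B hsym, map_smul, cenU]

open UniversalEnvelopingAlgebra in
lemma commute_cenU_genU (a : V) (m : ℤ) : Commute (cenU B) (genU B a m) :=
  sub_eq_zero.mp <| by rw [cenU, genU, ι_mul_ι_sub_ι_mul_ι, Heis.lie_cen, map_zero]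

open Pointwise in
lemma spanL_eq_span_mul :
    spanL B = Submodule.span ℂ
      (Set.range (Function.uncurry (genU B)) * Set.range (Function.uncurry (genU B))) := by
  rw [spanL]
  congr 1
  ext x
  constructor
  · rintro ⟨a, b, m, n, rfl⟩
    exact ⟨_, ⟨(a, m), rfl⟩, _, ⟨(b, n), rfl⟩, rfl⟩
  · rintro ⟨_, ⟨⟨a, m⟩, rfl⟩, _, ⟨⟨b, n⟩, rfl⟩, rfl⟩
    exact ⟨a, b, m, n, rfl⟩

lemma exists_apply_ne_zero_of_nondegenerate (hdim : 1 ≤ Module.finrank ℂ V)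
    (hnd : ∀ x, (∀ y, B x y = 0) → x = 0) : ∃ v w, B v w ≠ 0 := by
  have : Nontrivial V := Module.nontrivial_of_finrank_pos hdim
  obtain ⟨v, hv⟩ := exists_ne (0 : V)
  by_contra! h
  exact hv (hnd v (h v))

lemma cenU_mem_spanL (hdim : 1 ≤ Module.finrank ℂ V) (hsym : ∀ x y, B x y = B y x)
    (hnd : ∀ x, (∀ y, B x y = 0) → x = 0) : cenU B ∈ spanL B := by
  obtain ⟨v, w, hvw⟩ := exists_apply_ne_zero_of_nondegenerate B hdim hnd
  have h := genU_mul_genU_sub B hsym v w 1 (-1)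
  rw [if_pos rfl, Int.cast_one, one_mul] at h
  rw [← Submodule.smul_mem_iff _ hvw, ← h]
  exact sub_mem (Submodule.subset_span ⟨v, w, 1, -1, rfl⟩)
    (Submodule.subset_span ⟨w, v, -1, 1, rfl⟩)

theorem cen_mem_spanL_and_commutator_mem_c_mul_spanL
    (hdim : 1 ≤ Module.finrank ℂ V)
    (hsym : ∀ x y, B x y = B y x)
    (hnd : ∀ x, (∀ y, B x y = 0) → x = 0) :
    cenU B ∈ spanL B ∧
      ∀ x ∈ spanL B, ∀ y ∈ spanL B, ∃ z ∈ spanL B, x * y - y * x = cenU B * z := by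
  refine ⟨cenU_mem_spanL B hdim hsym hnd, fun x hx y hy => ?_⟩
  rw [spanL_eq_span_mul] at hx hy ⊢
  obtain ⟨z, hz, hxy⟩ := mul_sub_mul_mem_map_mulLeft_span_mul (k := ℂ)
    (g := Function.uncurry (genU B)) (fun p => commute_cenU_genU B p.1 p.2)
    (fun p q => ⟨_, genU_mul_genU_sub B hsym p.1 q.1 p.2 q.2⟩) hx hy
  exact ⟨z, hz, hxy.symm⟩
end
end

section
/- Let λ ∈ ℤⁿ satisfy 0 ≤ λ₁ ≤ λ₂ ≤ … ≤ λₙ. Then, as Laurent polynomials in ℤ[q, q⁻¹], Σ_{w ∈ W⁰} sgn(w) · q^{½(w(λ+ρ₀) − ρ, w(λ+ρ₀) − ρ) − ½(ρ₁,ρ₁)} = q^{½(λ+ρ₁, λ+ρ₁) − ½(ρ₁,ρ₁)} · Π_{α ∈ Φ⁺} (1 − q^{(λ+ρ₀, α)}), where all exponents appearing on both sides are integers. -/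
noncomputable section

variable (n : ℕ)

/-- The standard inner product on `ℚⁿ`. -/
def inn (x y : Fin n → ℚ) : ℚ := ∑ i, x i * y i

/-- The standard basis vector `ε_i` of `ℚⁿ`. -/
def stdV (i : Fin n) : Fin n → ℚ := Pi.single i 1

/-- The signed permutation `w_{σ,ε} ∈ W⁰` (hyperoctahedral group), acting on `ℚⁿ` by
`w(ε_i) = ε(σ(i))·ε_{σ(i)}`; every element of `W⁰` is `w_{σ,ε}` for exactly one pair
`(σ, ε)`. -/
def wAct (σ : Equiv.Perm (Fin n)) (ε : Fin n → ℤˣ) (x : Fin n → ℚ) : Fin n → ℚ :=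
  fun j => ((ε j : ℤ) : ℚ) * x (σ⁻¹ j)

/-- `sgn(w_{σ,ε}) = det(w_{σ,ε}) = sign(σ)·∏ᵢ εᵢ`. -/
def sgnW (σ : Equiv.Perm (Fin n)) (ε : Fin n → ℤˣ) : ℤ :=
  ((Equiv.Perm.sign σ * ∏ i, ε i : ℤˣ) : ℤ)

/-- `ρ₀ = Σₖ k·εₖ` (`k = 1, …, n`). -/
def rho0 : Fin n → ℚ := fun i => (i : ℚ) + 1

/-- `ρ₁ = ½ Σₖ εₖ`. -/
def rho1 : Fin n → ℚ := fun _ => 1 / 2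

/-- `ρ = ρ₀ − ρ₁`. -/
def rhoV : Fin n → ℚ := fun i => rho0 n i - rho1 n i

/-- The monomial `q^e` (with rational exponent `e`), in the group algebra
`ℤ[q^ℚ] ⊇ ℤ[q, q⁻¹]`. -/
def qpow (e : ℚ) : AddMonoidAlgebra ℤ ℚ := AddMonoidAlgebra.single e 1

/-- The exponent `½(w(λ+ρ₀) − ρ, w(λ+ρ₀) − ρ) − ½(ρ₁, ρ₁)` for `w = w_{σ,ε}`. -/
def lhsExp (lam : Fin n → ℤ) (σ : Equiv.Perm (Fin n)) (ε : Fin n → ℤˣ) : ℚ :=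
  1 / 2 * inn n (fun j => wAct n σ ε (fun i => (lam i : ℚ) + rho0 n i) j - rhoV n j)
            (fun j => wAct n σ ε (fun i => (lam i : ℚ) + rho0 n i) j - rhoV n j)
    - 1 / 2 * inn n (rho1 n) (rho1 n)

/-- The exponent `½(λ+ρ₁, λ+ρ₁) − ½(ρ₁, ρ₁)`. -/
def rhsExp (lam : Fin n → ℤ) : ℚ :=
  1 / 2 * inn n (fun i => (lam i : ℚ) + rho1 n i) (fun i => (lam i : ℚ) + rho1 n i)
    - 1 / 2 * inn n (rho1 n) (rho1 n)

/-! Expanding the square, the exponent of `w` is `½|μ|² + ½|ρ|² − ½|ρ₁|² − (wμ, ρ)` with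
`μ = λ + ρ₀`, so summing over the signs column by column turns the alternating sum into
`q^{½|μ|² + ½|ρ|² − ½|ρ₁|²} · det (q^{−μᵢρⱼ} − q^{μᵢρⱼ})`. Since `ρⱼ = j − ½`, the entries are
`bᵢ^{2j−1} − aᵢ^{2j−1}` with `aᵢ = q^{μᵢ/2}` and `bᵢ = aᵢ⁻¹`, and `bᵢ − aᵢ` divides them with
quotient a monic polynomial of degree `j − 1` in `aᵢ² + bᵢ²`. The determinant is therefore
`∏ (bᵢ − aᵢ)` times a Vandermonde determinant in the `q^{μᵢ} + q^{−μᵢ}`, and its factors are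
exactly the factors `1 − q^{(μ, α)}`, `α ∈ Φ⁺`, up to the monomial `q^{−(μ, ρ)}`; together with the
first monomial this gives `q^{½|μ − ρ|² − ½|ρ₁|²}`, the exponent of `w = 1`. -/

open Finset Matrix Polynomial

section Denominator

variable {R : Type*} [CommRing R]

/-- The polynomial `P` with `P(u + u⁻¹) = u⁻ʲ + ⋯ + u⁻¹ + 1 + u + ⋯ + uʲ`. -/
noncomputable def symmGeomSumPoly : ℕ → R[X]
  | 0 => 1
  | 1 => X + 1
  | j + 2 => X * symmGeomSumPoly (j + 1) - symmGeomSumPoly j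

theorem symmGeomSumPoly_monic_and_natDegree [Nontrivial R] :
    ∀ j, (symmGeomSumPoly j : R[X]).Monic ∧ (symmGeomSumPoly j : R[X]).natDegree = j
  | 0 => ⟨monic_one, natDegree_one⟩
  | 1 => ⟨monic_X_add_C 1, natDegree_X_add_C 1⟩
  | j + 2 => by
    obtain ⟨hmonic₁, hdeg₁⟩ : (symmGeomSumPoly (j + 1) : R[X]).Monic ∧
        (symmGeomSumPoly (j + 1) : R[X]).natDegree = j + 1 :=
      symmGeomSumPoly_monic_and_natDegree (j + 1)
    have hdeg₀ : (symmGeomSumPoly j : R[X]).natDegree = j :=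
      (symmGeomSumPoly_monic_and_natDegree j).2
    have hXmonic := monic_X.mul hmonic₁
    have hXdeg : (X * symmGeomSumPoly (j + 1) : R[X]).natDegree = j + 2 := by
      rw [monic_X.natDegree_mul hmonic₁, natDegree_X, hdeg₁, add_comm]
    have hlt : (symmGeomSumPoly j : R[X]).natDegree
        < (X * symmGeomSumPoly (j + 1) : R[X]).natDegree := by
      omega
    exact ⟨hXmonic.sub_of_left (degree_lt_degree hlt),
      by rw [symmGeomSumPoly, natDegree_sub_eq_left_of_natDegree_lt hlt, hXdeg]⟩

theorem sub_mul_eval_symmGeomSumPoly {a b : R} (hab : a * b = 1) :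
    ∀ j, (b - a) * (symmGeomSumPoly j).eval (a ^ 2 + b ^ 2) = b ^ (2 * j + 1) - a ^ (2 * j + 1)
  | 0 => by simp [symmGeomSumPoly]
  | 1 => by
    simp only [symmGeomSumPoly, eval_add, eval_X, eval_one]
    linear_combination (a - b) * hab
  | j + 2 => by
    have ih₁ := sub_mul_eval_symmGeomSumPoly hab (j + 1)
    have ih₀ := sub_mul_eval_symmGeomSumPoly hab j
    simp only [symmGeomSumPoly, eval_sub, eval_mul, eval_X]
    linear_combination (a ^ 2 + b ^ 2) * ih₁ - ih₀
      + (b ^ (2 * j + 1) - a ^ (2 * j + 1)) * (a * b + 1) * hab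

theorem det_pow_odd_sub_pow_odd_eq_vandermonde [Nontrivial R] {n : ℕ} (a b : Fin n → R)
    (hab : ∀ i, a i * b i = 1) :
    (of fun i j : Fin n => b i ^ (2 * (j : ℕ) + 1) - a i ^ (2 * (j : ℕ) + 1)).det
      = (∏ i, (b i - a i)) * ∏ i, ∏ j ∈ Ioi i, ((a j ^ 2 + b j ^ 2) - (a i ^ 2 + b i ^ 2)) := by
  have hfactor : (of fun i j : Fin n => b i ^ (2 * (j : ℕ) + 1) - a i ^ (2 * (j : ℕ) + 1))
      = of fun i j => (b i - a i) *
          (of fun i j : Fin n => (symmGeomSumPoly (j : ℕ)).eval (a i ^ 2 + b i ^ 2)) i j := by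
    ext i j
    simp [sub_mul_eval_symmGeomSumPoly (hab i)]
  rw [hfactor, det_mul_column, ← det_eval_matrixOfPolynomials_eq_det_vandermonde _ _
    (fun j => (symmGeomSumPoly_monic_and_natDegree _).2)
    (fun j => (symmGeomSumPoly_monic_and_natDegree _).1), det_vandermonde]

theorem prod_prod_Ioi_eq_prod_pow {M : Type*} [CommMonoid M] {n : ℕ} (f : Fin n → M) :
    ∏ i, ∏ j ∈ Ioi i, f j = ∏ j, f j ^ (j : ℕ) := by
  rw [prod_comm' (t' := univ) (s' := Iio) (fun i j => by simp)]
  simp [prod_const, Fin.card_Iio]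

theorem det_pow_odd_sub_pow_odd [Nontrivial R] {n : ℕ} (a b : Fin n → R)
    (hab : ∀ i, a i * b i = 1) :
    (of fun i j : Fin n => b i ^ (2 * (j : ℕ) + 1) - a i ^ (2 * (j : ℕ) + 1)).det
      = (∏ j, b j ^ (2 * (j : ℕ) + 1)) *
          ((∏ i, ∏ j ∈ Ioi i, (1 - a j ^ 2 * b i ^ 2)) *
            (∏ i, ∏ j ∈ Ioi i, (1 - a i ^ 2 * a j ^ 2)) * ∏ i, (1 - a i ^ 2)) := by
  have hlinear : ∀ i, b i - a i = b i * (1 - a i ^ 2) := fun i => by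
    linear_combination a i * hab i
  have hquadratic : ∀ i j, (a j ^ 2 + b j ^ 2) - (a i ^ 2 + b i ^ 2)
      = b j ^ 2 * ((1 - a j ^ 2 * b i ^ 2) * (1 - a i ^ 2 * a j ^ 2)) := fun i j => by
    linear_combination (a j * b j + 1) * (a i ^ 2 + b i ^ 2 - a j ^ 2) * hab j
      - a j ^ 2 * (a j * b j) ^ 2 * (a i * b i + 1) * hab i
  have hpow : ∏ j, b j ^ (2 * (j : ℕ) + 1) = (∏ i, ∏ j ∈ Ioi i, b j ^ 2) * ∏ j, b j := by
    rw [prod_prod_Ioi_eq_prod_pow, ← prod_mul_distrib]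
    exact prod_congr rfl fun j _ => by ring
  rw [det_pow_odd_sub_pow_odd_eq_vandermonde a b hab, hpow]
  simp only [hlinear, hquadratic, prod_mul_distrib]
  ring

theorem sum_units_int_zsmul {M : Type*} [AddCommGroup M] (f : ℤˣ → M) :
    ∑ u : ℤˣ, (u : ℤ) • f u = f 1 - f (-1) := by
  simp [UnitsInt.univ, sub_eq_add_neg]

theorem sum_perm_sum_units_eq_det {ι : Type*} [Fintype ι] [DecidableEq ι] (g : ι → ι → ℤˣ → R) :
    ∑ σ : Equiv.Perm ι, ∑ ε : ι → ℤˣ,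
        (((Equiv.Perm.sign σ * ∏ i, ε i : ℤˣ) : ℤ) : R) * ∏ j, g (σ⁻¹ j) j (ε j)
      = (of fun i j => g i j 1 - g i j (-1)).det := by
  rw [← det_transpose, det_apply]
  refine sum_congr rfl fun σ _ => ?_
  calc ∑ ε : ι → ℤˣ, (((Equiv.Perm.sign σ * ∏ i, ε i : ℤˣ) : ℤ) : R) * ∏ j, g (σ⁻¹ j) j (ε j)
      = (Equiv.Perm.sign σ : ℤ) • ∑ ε : ι → ℤˣ, ∏ j, ((ε j : ℤ) • g (σ⁻¹ j) j (ε j)) := by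
        simp [mul_sum, prod_mul_distrib, mul_assoc]
    _ = (Equiv.Perm.sign σ : ℤ) • ∏ j, (g (σ⁻¹ j) j 1 - g (σ⁻¹ j) j (-1)) := by
        rw [← Fintype.prod_sum fun j (u : ℤˣ) => (u : ℤ) • g (σ⁻¹ j) j u]
        simp only [sum_units_int_zsmul]
    _ = Equiv.Perm.sign σ • ∏ i, (of fun i j => g i j 1 - g i j (-1))ᵀ (σ i) i := by
        rw [← Equiv.prod_comp σ]
        simp [Units.smul_def]

end Denominator

theorem qpow_eq_of (e : ℚ) : qpow e = AddMonoidAlgebra.of ℤ ℚ (Multiplicative.ofAdd e) :=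
  (AddMonoidAlgebra.of_apply _).symm

theorem qpow_zero : qpow 0 = 1 := rfl

theorem qpow_add (e f : ℚ) : qpow (e + f) = qpow e * qpow f := by
  simp only [qpow_eq_of, ofAdd_add, map_mul]

theorem qpow_sum {ι : Type*} (s : Finset ι) (e : ι → ℚ) :
    qpow (∑ i ∈ s, e i) = ∏ i ∈ s, qpow (e i) := by
  simp only [qpow_eq_of, ofAdd_sum, map_prod]

theorem qpow_pow (e : ℚ) (k : ℕ) : qpow e ^ k = qpow (k * e) := by
  simp only [qpow_eq_of, ← map_pow, ← ofAdd_nsmul, nsmul_eq_mul]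

theorem single_eq_zsmul_qpow (e : ℚ) (c : ℤ) : AddMonoidAlgebra.single e c = c • qpow e := by
  rw [qpow, AddMonoidAlgebra.smul_single', mul_one]

theorem inn_stdV (x : Fin n → ℚ) (i : Fin n) : inn n x (stdV n i) = x i := by
  simp [inn, stdV, Pi.single_apply]

theorem inn_stdV_sub_stdV (x : Fin n → ℚ) (i j : Fin n) :
    inn n x (fun k => stdV n j k - stdV n i k) = x j - x i := by
  simp only [inn, mul_sub, sum_sub_distrib]
  exact congrArg₂ _ (inn_stdV n x j) (inn_stdV n x i)

theorem inn_stdV_add_stdV (x : Fin n → ℚ) (i j : Fin n) :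
    inn n x (fun k => stdV n i k + stdV n j k) = x i + x j := by
  simp only [inn, mul_add, sum_add_distrib]
  exact congrArg₂ _ (inn_stdV n x i) (inn_stdV n x j)

theorem inn_sub_self (x y : Fin n → ℚ) :
    inn n (fun k => x k - y k) (fun k => x k - y k) = inn n x x - 2 * inn n x y + inn n y y := by
  simp only [inn, mul_sum, ← sum_sub_distrib, ← sum_add_distrib]
  exact sum_congr rfl fun k _ => by ring

theorem inn_wAct_wAct (σ : Equiv.Perm (Fin n)) (ε : Fin n → ℤˣ) (x y : Fin n → ℚ) :
    inn n (wAct n σ ε x) (wAct n σ ε y) = inn n x y := by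
  have hsq : ∀ u : ℤˣ, ((u : ℤ) : ℚ) * (u : ℤ) = 1 := fun u => by
    rcases Int.units_eq_one_or u with rfl | rfl <;> norm_num
  simp only [inn, wAct]
  rw [← Equiv.sum_comp σ]
  exact sum_congr rfl fun i _ => by
    simp only [Equiv.Perm.coe_inv, Equiv.symm_apply_apply]
    linear_combination x i * y i * hsq (ε (σ i))

theorem wAct_one_one (x : Fin n → ℚ) : wAct n 1 1 x = x := by
  ext j
  simp [wAct]

def weylExp (μ : Fin n → ℚ) (σ : Equiv.Perm (Fin n)) (ε : Fin n → ℤˣ) : ℚ :=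
  1 / 2 * inn n (fun j => wAct n σ ε μ j - rhoV n j) (fun j => wAct n σ ε μ j - rhoV n j)
    - 1 / 2 * inn n (rho1 n) (rho1 n)

theorem lhsExp_eq_weylExp (lam : Fin n → ℤ) (σ : Equiv.Perm (Fin n)) (ε : Fin n → ℤˣ) :
    lhsExp n lam σ ε = weylExp n (fun i => (lam i : ℚ) + rho0 n i) σ ε :=
  rfl

theorem weylExp_eq (μ : Fin n → ℚ) (σ : Equiv.Perm (Fin n)) (ε : Fin n → ℤˣ) :
    weylExp n μ σ ε = weylExp n μ 1 1 + inn n μ (rhoV n) - inn n (wAct n σ ε μ) (rhoV n) := by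
  simp only [weylExp, inn_sub_self, inn_wAct_wAct, wAct_one_one]
  ring

theorem rhsExp_eq_weylExp (lam : Fin n → ℤ) :
    rhsExp n lam = weylExp n (fun i => (lam i : ℚ) + rho0 n i) 1 1 := by
  have hshift : (fun j => (lam j : ℚ) + rho0 n j - rhoV n j) = fun j => (lam j : ℚ) + rho1 n j := by
    funext j
    rw [rhoV]
    ring
  simp only [rhsExp, weylExp, wAct_one_one, hshift]

theorem sum_single_weylExp_eq_det (μ : Fin n → ℚ) :
    ∑ σ : Equiv.Perm (Fin n), ∑ ε : Fin n → ℤˣ,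
        AddMonoidAlgebra.single (weylExp n μ σ ε) (sgnW n σ ε)
      = qpow (weylExp n μ 1 1 + inn n μ (rhoV n)) *
          (of fun i j => qpow (-(μ i * rhoV n j)) - qpow (μ i * rhoV n j)).det := by
  let g : Fin n → Fin n → ℤˣ → AddMonoidAlgebra ℤ ℚ := fun i j u =>
    qpow (-((u : ℤ) * (μ i * rhoV n j)))
  have hterm : ∀ σ ε, AddMonoidAlgebra.single (weylExp n μ σ ε) (sgnW n σ ε)
      = qpow (weylExp n μ 1 1 + inn n μ (rhoV n)) *
          ((((Equiv.Perm.sign σ * ∏ i, ε i : ℤˣ) : ℤ) : AddMonoidAlgebra ℤ ℚ) *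
            ∏ j, g (σ⁻¹ j) j (ε j)) := fun σ ε => by
    have hpair : -inn n (wAct n σ ε μ) (rhoV n) = ∑ j, -((ε j : ℤ) * (μ (σ⁻¹ j) * rhoV n j)) := by
      simp only [inn, wAct, ← sum_neg_distrib, mul_assoc]
    rw [single_eq_zsmul_qpow, weylExp_eq, sub_eq_add_neg, qpow_add, hpair, qpow_sum, sgnW,
      zsmul_eq_mul]
    ring
  have hentry : ∀ i j, g i j 1 - g i j (-1) = qpow (-(μ i * rhoV n j)) - qpow (μ i * rhoV n j) :=
    fun i j => by simp [g]
  simp only [hterm, ← mul_sum, sum_perm_sum_units_eq_det, hentry]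

theorem det_qpow_neg_sub_qpow (μ : Fin n → ℚ) :
    (of fun i j => qpow (-(μ i * rhoV n j)) - qpow (μ i * rhoV n j)).det
      = qpow (-inn n μ (rhoV n)) *
          ((∏ i, ∏ j ∈ Ioi i, (1 - qpow (μ j - μ i))) *
            (∏ i, ∏ j ∈ Ioi i, (1 - qpow (μ i + μ j))) * ∏ i, (1 - qpow (μ i))) := by
  have hinv : ∀ i, qpow (μ i / 2) * qpow (-μ i / 2) = 1 := fun i => by
    rw [← qpow_add, neg_div, add_neg_cancel, qpow_zero]
  have hodd : ∀ (e : ℚ) (j : Fin n), qpow (e / 2) ^ (2 * (j : ℕ) + 1) = qpow (e * rhoV n j) :=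
    fun e j => by
      rw [qpow_pow, rhoV, rho0, rho1]
      congr 1
      push_cast
      ring
  have hsq : ∀ e : ℚ, qpow (e / 2) ^ 2 = qpow e := fun e => by
    rw [qpow_pow]
    congr 1
    push_cast
    ring
  have hmatrix := det_pow_odd_sub_pow_odd (fun i => qpow (μ i / 2)) (fun i => qpow (-μ i / 2)) hinv
  simp only [hodd, hsq, ← qpow_add, neg_mul, ← sub_eq_add_neg, ← qpow_sum, sum_neg_distrib]
    at hmatrix
  rwa [inn]

theorem sum_single_weylExp (μ : Fin n → ℚ) :
    ∑ σ : Equiv.Perm (Fin n), ∑ ε : Fin n → ℤˣ,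
        AddMonoidAlgebra.single (weylExp n μ σ ε) (sgnW n σ ε)
      = qpow (weylExp n μ 1 1) *
          ((∏ i, ∏ j ∈ Ioi i, (1 - qpow (μ j - μ i))) *
            (∏ i, ∏ j ∈ Ioi i, (1 - qpow (μ i + μ j))) * ∏ i, (1 - qpow (μ i))) := by
  rw [sum_single_weylExp_eq_det, det_qpow_neg_sub_qpow, ← mul_assoc, ← qpow_add,
    add_neg_cancel_right]

theorem exists_int_eq_half_inn_sub_half_inn_rho1 (v : Fin n → ℚ)
    (hv : ∀ i, ∃ k : ℤ, v i = k + 1 / 2) :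
    ∃ z : ℤ, (z : ℚ) = 1 / 2 * inn n v v - 1 / 2 * inn n (rho1 n) (rho1 n) := by
  choose k hk using hv
  choose m hm using fun i => Int.even_mul_succ_self (k i)
  refine ⟨∑ i, m i, ?_⟩
  simp only [inn, rho1, hk, mul_sum, ← sum_sub_distrib, Int.cast_sum]
  refine sum_congr rfl fun i _ => ?_
  have hmQ : ((k i : ℚ) * (k i + 1)) = m i + m i := by exact_mod_cast hm i
  linear_combination -hmQ / 2

theorem exists_int_eq_weylExp (m : Fin n → ℤ) (σ : Equiv.Perm (Fin n)) (ε : Fin n → ℤˣ) :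
    ∃ z : ℤ, (z : ℚ) = weylExp n (fun i => (m i : ℚ)) σ ε :=
  exists_int_eq_half_inn_sub_half_inn_rho1 n _ fun j =>
    ⟨ε j * m (σ⁻¹ j) - j - 1, by simp only [wAct, rhoV, rho0, rho1]; push_cast; ring⟩

theorem weyl_sum_eq_product
    (lam : Fin n → ℤ) :
    -- all exponents are integers
    (∀ (σ : Equiv.Perm (Fin n)) (ε : Fin n → ℤˣ), ∃ z : ℤ, (z : ℚ) = lhsExp n lam σ ε) ∧
    (∃ z : ℤ, (z : ℚ) = rhsExp n lam) ∧
    (∀ i j : Fin n, ∃ z : ℤ,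
      (z : ℚ) = inn n (fun i => (lam i : ℚ) + rho0 n i) (fun k => stdV n j k - stdV n i k)) ∧
    (∀ i j : Fin n, ∃ z : ℤ,
      (z : ℚ) = inn n (fun i => (lam i : ℚ) + rho0 n i) (fun k => stdV n i k + stdV n j k)) ∧
    (∀ i : Fin n, ∃ z : ℤ,
      (z : ℚ) = inn n (fun i => (lam i : ℚ) + rho0 n i) (stdV n i)) ∧
    -- the identity itself
    (∑ σ : Equiv.Perm (Fin n), ∑ ε : Fin n → ℤˣ,
        (AddMonoidAlgebra.single (lhsExp n lam σ ε) (sgnW n σ ε) : AddMonoidAlgebra ℤ ℚ)) =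
      qpow (rhsExp n lam)
        * ((∏ i : Fin n, ∏ j ∈ Finset.Ioi i,
              (1 - qpow (inn n (fun i => (lam i : ℚ) + rho0 n i)
                (fun k => stdV n j k - stdV n i k))))
          * (∏ i : Fin n, ∏ j ∈ Finset.Ioi i,
              (1 - qpow (inn n (fun i => (lam i : ℚ) + rho0 n i)
                (fun k => stdV n i k + stdV n j k))))
          * ∏ i : Fin n,
              (1 - qpow (inn n (fun i => (lam i : ℚ) + rho0 n i) (stdV n i)))) := by
  obtain ⟨m, hμ⟩ : ∃ m : Fin n → ℤ, (fun i => (lam i : ℚ) + rho0 n i) = fun i => (m i : ℚ) :=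
    ⟨fun i => lam i + i + 1, by funext i; simp only [rho0]; push_cast; ring⟩
  refine ⟨fun σ ε => by rw [lhsExp_eq_weylExp, hμ]; exact exists_int_eq_weylExp n m σ ε,
    by rw [rhsExp_eq_weylExp, hμ]; exact exists_int_eq_weylExp n m 1 1,
    fun i j => ⟨m j - m i, by rw [hμ, inn_stdV_sub_stdV, Int.cast_sub]⟩,
    fun i j => ⟨m i + m j, by rw [hμ, inn_stdV_add_stdV, Int.cast_add]⟩,
    fun i => ⟨m i, by rw [hμ, inn_stdV]⟩, ?_⟩
  simp only [lhsExp_eq_weylExp, rhsExp_eq_weylExp, inn_stdV_sub_stdV, inn_stdV_add_stdV, inn_stdV]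
  exact sum_single_weylExp n _
end
end
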